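/- arXiv:2109.07530 — 2 statements merged into one kernel-verified Lean document; each statement's English description precedes it below -/
import Mathlib

section
/- Let N > 1, κ ∈ {−1, 0, 1}, K = κ(N−1), λ ∈ (0,1], and L > 0, with L < π in the case κ = 1. Then for every ε > 0 there exists δ₀ > 0, depending only on N, λ, L, ε, such that for every D ∈ [λL, L] and every a ∈ (0, δ₀) one has |v_{K,N,D}(a)·k_D / a^N − 1| ≤ ε; i.e. v_{K,N,D}(a) = (a^N/k_D)(1 + o(1)) as a → 0⁺, uniformly in D ∈ [λL, L]. -/
open MeasureTheory Filter Set

/-- The function `s_κ`. -/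
noncomputable def sK (κ θ : ℝ) : ℝ :=
  if 0 < κ then Real.sin (Real.sqrt κ * θ) / Real.sqrt κ
  else if κ = 0 then θ
  else Real.sinh (Real.sqrt (-κ) * θ) / Real.sqrt (-κ)

/-- `k_D = ∫₀^D s_κ(t)^(N-1) dt`. -/
noncomputable def kD (κ N D : ℝ) : ℝ := ∫ t in (0:ℝ)..D, sK κ t ^ (N - 1)

/-- The function `f_{K,N,D}` (with `K = κ(N-1)`). -/
noncomputable def fKND (κ N D x : ℝ) : ℝ :=
  ((∫ y in (0:ℝ)..x, (sK κ (D - y) / sK κ (D - x)) ^ (N - 1)) +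
    ∫ y in x..D, (sK κ y / sK κ x) ^ (N - 1))⁻¹

/-- The model density `h^a_{K,N,D}` (with `K = κ(N-1)`). -/
noncomputable def hKND (κ N D a x : ℝ) : ℝ :=
  if x ≤ a then fKND κ N D a * (sK κ (D - x) / sK κ (D - a)) ^ (N - 1)
  else fKND κ N D a * (sK κ x / sK κ a) ^ (N - 1)

/-- The volume map `v_{K,N,D}(a) = ∫₀^a h^a_{K,N,D}`. -/
noncomputable def vKND (κ N D a : ℝ) : ℝ := ∫ x in (0:ℝ)..a, hKND κ N D a x

/-- `ω_N = π^(N/2)/Γ(N/2+1)`. -/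
noncomputable def omegaN (N : ℝ) : ℝ := Real.pi ^ (N / 2) / Real.Gamma (N / 2 + 1)

/-- `Vol_{K,N}(r) = N ω_N ∫₀^r s_κ(t)^(N-1) dt` (with `K = κ(N-1)`). -/
noncomputable def VolKN (κ N r : ℝ) : ℝ := N * omegaN N * ∫ t in (0:ℝ)..r, sK κ t ^ (N - 1)

/-- The coefficient `σ^{(s)}_{K,N-1}(θ)`, valued in `[0,∞]`. -/
noncomputable def sigmaE (K N s θ : ℝ) : ENNReal :=
  if (N - 1) * Real.pi ^ 2 ≤ K * θ ^ 2 then ⊤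
  else ENNReal.ofReal (sK (K / (N - 1)) (s * θ) / sK (K / (N - 1)) θ)

/-- A nonnegative continuous function `h` on the interval `I` is an `MCP(K,N)` density. -/
def IsMCPDensity (K N : ℝ) (I : Set ℝ) (h : ℝ → ℝ) : Prop :=
  ContinuousOn h I ∧ (∀ x ∈ I, 0 ≤ h x) ∧
    ∀ x₀ ∈ I, ∀ x₁ ∈ I, ∀ t ∈ Set.Icc (0:ℝ) 1,
      sigmaE K N (1 - t) |x₁ - x₀| ^ (N - 1) * ENNReal.ofReal (h x₀) ≤
        ENNReal.ofReal (h (t * x₁ + (1 - t) * x₀))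

/-- The measure `h·𝓛¹` restricted to `[0,D]`. -/
noncomputable def mcMeasure (D : ℝ) (h : ℝ → ℝ) : Measure ℝ :=
  (volume.restrict (Set.Icc 0 D)).withDensity fun x => ENNReal.ofReal (h x)

/-- The outer Minkowski content `μ⁺(E) = liminf_{ρ→0⁺} (μ(E^ρ) - μ(E))/ρ`. -/
noncomputable def minkContent (μ : Measure ℝ) (E : Set ℝ) : ℝ :=
  Filter.liminf (fun ρ : ℝ => ((μ (Metric.thickening ρ E)).toReal - (μ E).toReal) / ρ)
    (nhdsWithin 0 (Set.Ioi 0))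


/-!
With `R = (mean of s_κ^(N-1) over [D - a, D]) / s_κ(D - a)^(N-1)`, `σ = s_κ(a)^(N-1)` and
`k_a = ∫₀^a s_κ^(N-1)`, the two integrals defining `f_{K,N,D}(a)` are `a R` and
`(k_D - k_a) / σ`, so that
  `v_{K,N,D}(a) k_D / a^N = R (s_κ(a)/a)^(N-1) / (1 + (a R σ - k_a) / k_D)`.
As `a → 0⁺`: `s_κ(a)/a → s_κ'(0) = 1`; `σ, k_a → 0`; `k_D` stays away from `0` on `[λL, L]`;
and `R → 1` uniformly in `D`, because the mean, written as `∫₀¹ s_κ(D - a t)^(N-1) dt`, is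
jointly continuous in `(a, D)` up to `a = 0`, and `[λL, L]` is compact.
Uniformity in `D` over a set `S` is expressed as convergence along `𝓝[>] 0 ×ˢ 𝓟 S`.
-/

open Topology

lemma sK_of_pos {κ : ℝ} (hκ : 0 < κ) : sK κ = fun θ => Real.sin (√κ * θ) / √κ := by
  funext θ; simp [sK, hκ]

lemma sK_of_neg {κ : ℝ} (hκ : κ < 0) : sK κ = fun θ => Real.sinh (√(-κ) * θ) / √(-κ) := by
  funext θ; simp [sK, hκ.not_gt, hκ.ne]

lemma sK_zero_left : sK 0 = id := by
  funext θ; simp [sK]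

lemma sK_apply_zero (κ : ℝ) : sK κ 0 = 0 := by
  rcases lt_trichotomy κ 0 with hκ | rfl | hκ
  · simp [sK_of_neg hκ]
  · simp [sK_zero_left]
  · simp [sK_of_pos hκ]

@[fun_prop]
lemma continuous_sK (κ : ℝ) : Continuous (sK κ) := by
  rcases lt_trichotomy κ 0 with hκ | rfl | hκ
  · rw [sK_of_neg hκ]; fun_prop
  · rw [sK_zero_left]; fun_prop
  · rw [sK_of_pos hκ]; fun_prop

lemma hasDerivAt_sK_zero (κ : ℝ) : HasDerivAt (sK κ) 1 0 := by
  rcases lt_trichotomy κ 0 with hκ | rfl | hκ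
  · have hs : √(-κ) ≠ 0 := (Real.sqrt_pos.2 (neg_pos.2 hκ)).ne'
    rw [sK_of_neg hκ]
    simpa [hs] using (((hasDerivAt_id' (0:ℝ)).const_mul √(-κ)).sinh).div_const √(-κ)
  · rw [sK_zero_left]; exact hasDerivAt_id 0
  · have hs : √κ ≠ 0 := (Real.sqrt_pos.2 hκ).ne'
    rw [sK_of_pos hκ]
    simpa [hs] using (((hasDerivAt_id' (0:ℝ)).const_mul √κ).sin).div_const √κ

lemma sK_pos {κ θ : ℝ} (hθ : 0 < θ) (hπ : 0 < κ → √κ * θ < Real.pi) : 0 < sK κ θ := by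
  rcases lt_trichotomy κ 0 with hκ | rfl | hκ
  · have hs : 0 < √(-κ) := Real.sqrt_pos.2 (neg_pos.2 hκ)
    rw [sK_of_neg hκ]
    exact div_pos (Real.sinh_pos_iff.2 (mul_pos hs hθ)) hs
  · rwa [sK_zero_left]
  · have hs : 0 < √κ := Real.sqrt_pos.2 hκ
    rw [sK_of_pos hκ]
    exact div_pos (Real.sin_pos_of_pos_of_lt_pi (mul_pos hs hθ) (hπ hκ)) hs

lemma tendsto_sK_div_self (κ : ℝ) : Tendsto (fun a => sK κ a / a) (𝓝[>] 0) (𝓝 1) := by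
  simpa [sK_apply_zero, div_eq_inv_mul] using (hasDerivAt_sK_zero κ).tendsto_slope_zero_right

lemma continuous_sK_rpow (κ : ℝ) {N : ℝ} (hN : 1 ≤ N) : Continuous fun t => sK κ t ^ (N - 1) :=
  (Real.continuous_rpow_const (by linarith)).comp (continuous_sK κ)

lemma continuous_kD (κ : ℝ) {N : ℝ} (hN : 1 ≤ N) : Continuous (kD κ N) :=
  intervalIntegral.continuous_primitive
    (fun _ _ => (continuous_sK_rpow κ hN).intervalIntegrable _ _) 0

@[simp]
lemma kD_zero (κ N : ℝ) : kD κ N 0 = 0 := by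
  simp [kD]

lemma integral_sK_rpow_pos {κ N : ℝ} (hN : 1 ≤ N) {a b : ℝ} (hab : a < b)
    (hpos : ∀ t ∈ Ioo a b, 0 < sK κ t) : 0 < ∫ t in a..b, sK κ t ^ (N - 1) :=
  intervalIntegral.intervalIntegral_pos_of_pos_on
    ((continuous_sK_rpow κ hN).intervalIntegrable _ _)
    (fun t ht => Real.rpow_pos_of_pos (hpos t ht) _) hab

lemma integral_sK_div_sK_rpow {κ N : ℝ} (hN : 1 ≤ N) {a D : ℝ} (haD : a ≤ D)
    (hnonneg : ∀ t ∈ Icc a D, 0 ≤ sK κ t) :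
    ∫ y in a..D, (sK κ y / sK κ a) ^ (N - 1) = (kD κ N D - kD κ N a) / sK κ a ^ (N - 1) := by
  have hint := fun b c => (continuous_sK_rpow κ hN).intervalIntegrable (μ := volume) b c
  rw [kD, kD, intervalIntegral.integral_interval_sub_left (hint 0 D) (hint 0 a),
    ← intervalIntegral.integral_div]
  refine intervalIntegral.integral_congr fun y hy => ?_
  rw [uIcc_of_le haD] at hy
  exact Real.div_rpow (hnonneg y hy) (hnonneg a (left_mem_Icc.2 haD)) _

noncomputable def meanSKPow (κ N D a : ℝ) : ℝ := ∫ t in (0:ℝ)..1, sK κ (D - a * t) ^ (N - 1)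

lemma continuous_meanSKPow (κ : ℝ) {N : ℝ} (hN : 1 ≤ N) :
    Continuous fun p : ℝ × ℝ => meanSKPow κ N p.2 p.1 := by
  refine intervalIntegral.continuous_parametric_intervalIntegral_of_continuous' ?_ 0 1
  exact (continuous_sK_rpow κ hN).comp (by fun_prop)

@[simp]
lemma meanSKPow_zero (κ N D : ℝ) : meanSKPow κ N D 0 = sK κ D ^ (N - 1) := by
  simp [meanSKPow]

lemma integral_sK_sub_div_sK_sub_rpow {κ N D a : ℝ} (ha : 0 < a)
    (hnonneg : ∀ t ∈ Icc (D - a) D, 0 ≤ sK κ t) :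
    ∫ y in (0:ℝ)..a, (sK κ (D - y) / sK κ (D - a)) ^ (N - 1) =
      a * meanSKPow κ N D a / sK κ (D - a) ^ (N - 1) := by
  have hmean : a * meanSKPow κ N D a = ∫ y in (0:ℝ)..a, sK κ (D - y) ^ (N - 1) := by
    rw [meanSKPow, intervalIntegral.integral_comp_mul_left (fun y => sK κ (D - y) ^ (N - 1))
      ha.ne', smul_eq_mul, mul_inv_cancel_left₀ ha.ne', mul_zero, mul_one]
  rw [hmean, ← intervalIntegral.integral_div]
  refine intervalIntegral.integral_congr fun y hy => ?_
  rw [uIcc_of_le ha.le] at hy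
  exact Real.div_rpow (hnonneg _ ⟨by linarith [hy.2], by linarith [hy.1]⟩)
    (hnonneg _ ⟨le_rfl, by linarith⟩) _

lemma vKND_mul_kD_div_rpow_eq {κ N D a : ℝ} (hN : 1 ≤ N) (ha : 0 < a) (haD : a < D)
    (hpos : ∀ t ∈ Ioc 0 D, 0 < sK κ t) :
    vKND κ N D a * kD κ N D / a ^ N =
      meanSKPow κ N D a / sK κ (D - a) ^ (N - 1) * (sK κ a / a) ^ (N - 1) /
        (1 + (a * (meanSKPow κ N D a / sK κ (D - a) ^ (N - 1)) * sK κ a ^ (N - 1) -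
          kD κ N a) / kD κ N D) := by
  have hnonneg : ∀ t ∈ Icc 0 D, 0 ≤ sK κ t := fun t ht =>
    ht.1.eq_or_lt.elim (fun h => h ▸ (sK_apply_zero κ).ge) fun h => (hpos t ⟨h, ht.2⟩).le
  have hleft := integral_sK_sub_div_sK_sub_rpow (N := N) ha
    fun t ht => hnonneg t ⟨by linarith [ht.1], ht.2⟩
  have hright := integral_sK_div_sK_rpow hN haD.le fun t ht => hnonneg t ⟨ha.le.trans ht.1, ht.2⟩
  have hv : vKND κ N D a = fKND κ N D a *
      ∫ y in (0:ℝ)..a, (sK κ (D - y) / sK κ (D - a)) ^ (N - 1) := by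
    rw [vKND, ← intervalIntegral.integral_const_mul]
    refine intervalIntegral.integral_congr fun x hx => ?_
    rw [uIcc_of_le ha.le] at hx
    simp only [hKND, if_pos hx.2]
  have hmean : 0 ≤ meanSKPow κ N D a := intervalIntegral.integral_nonneg zero_le_one
    fun t ht => Real.rpow_nonneg (hnonneg _ ⟨by nlinarith [ht.2], by nlinarith [ht.1]⟩) _
  have hσ : 0 < sK κ a ^ (N - 1) := Real.rpow_pos_of_pos (hpos a ⟨ha, haD.le⟩) _
  have hτ : 0 < sK κ (D - a) ^ (N - 1) := Real.rpow_pos_of_pos (hpos _ ⟨by linarith, by linarith⟩) _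
  have hP : 0 < kD κ N D := integral_sK_rpow_pos hN (ha.trans haD)
    fun t ht => hpos t ⟨ht.1, ht.2.le⟩
  have hPQ : 0 < kD κ N D - kD κ N a := by
    rw [kD, kD, intervalIntegral.integral_interval_sub_left
      ((continuous_sK_rpow κ hN).intervalIntegrable _ _)
      ((continuous_sK_rpow κ hN).intervalIntegrable _ _)]
    exact integral_sK_rpow_pos hN haD fun t ht => hpos t ⟨ha.trans ht.1, ht.2.le⟩
  have haN : a ^ (N - 1) = a ^ N / a := Real.rpow_sub_one ha.ne' N
  rw [hv, fKND, hleft, hright, Real.div_rpow (hnonneg a ⟨ha.le, haD.le⟩) ha.le, haN]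
  have hden : 0 < a * meanSKPow κ N D a * sK κ a ^ (N - 1) +
      sK κ (D - a) ^ (N - 1) * (kD κ N D - kD κ N a) := by positivity
  rw [div_add_div _ _ hτ.ne' hσ.ne', inv_div, one_add_div hP.ne']
  generalize meanSKPow κ N D a = M at *
  generalize sK κ a ^ (N - 1) = σ at *
  generalize sK κ (D - a) ^ (N - 1) = τ at *
  generalize kD κ N D = P at *
  generalize kD κ N a = Q at *
  have hsum : P + (a * (M / τ) * σ - Q) = (a * M * σ + τ * (P - Q)) / τ := by
    field_simp; ring
  rw [hsum]
  field_simp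

lemma tendsto_nhdsWithin_prod_principal_of_continuousOn {α β γ : Type*} [TopologicalSpace α]
    [TopologicalSpace β] [PseudoMetricSpace γ] {Φ : α × β → γ} {s : Set α} {k : Set β} {q : α}
    {y : γ} (hk : IsCompact k) (hΦ : ContinuousOn Φ (s ×ˢ k)) (hq : q ∈ s)
    (hy : ∀ x ∈ k, Φ (q, x) = y) : Tendsto Φ (𝓝[s] q ×ˢ 𝓟 k) (𝓝 y) := by
  refine Metric.tendsto_nhds.2 fun ε hε => ?_
  obtain ⟨v, hv, hvk⟩ := hk.mem_uniformity_of_prod (f := Function.curry Φ) (by simpa using hΦ) hq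
    (Metric.dist_mem_uniformity hε)
  refine eventually_prod_principal_iff.2 (Filter.mem_of_superset hv fun p hp x hx => ?_)
  simpa [hy x hx] using hvk p hp x hx

lemma tendsto_meanSKPow_div_sK_rpow {κ N c : ℝ} {S : Set ℝ} (hN : 1 ≤ N) (hS : IsCompact S)
    (hc : 0 < c) (hpos : ∀ D ∈ S, ∀ a ∈ Icc 0 c, 0 < sK κ (D - a)) :
    Tendsto (fun p : ℝ × ℝ => meanSKPow κ N p.2 p.1 / sK κ (p.2 - p.1) ^ (N - 1))
      (𝓝[>] 0 ×ˢ 𝓟 S) (𝓝 1) := by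
  have hτ : ∀ p ∈ Icc 0 c ×ˢ S, sK κ (p.2 - p.1) ^ (N - 1) ≠ 0 := fun p hp =>
    (Real.rpow_pos_of_pos (hpos p.2 hp.2 p.1 hp.1) _).ne'
  have hcont : ContinuousOn (fun p : ℝ × ℝ => meanSKPow κ N p.2 p.1 / sK κ (p.2 - p.1) ^ (N - 1))
      (Icc 0 c ×ˢ S) :=
    (continuous_meanSKPow κ hN).continuousOn.div
      ((continuous_sK_rpow κ hN).comp (by fun_prop)).continuousOn hτ
  refine (tendsto_nhdsWithin_prod_principal_of_continuousOn hS hcont (left_mem_Icc.2 hc.le)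
    fun D hD => ?_).mono_left (Filter.prod_mono (nhdsWithin_le_of_mem (Icc_mem_nhdsGT hc)) le_rfl)
  simpa using div_self (hτ (0, D) ⟨left_mem_Icc.2 hc.le, hD⟩)

lemma tendsto_vKND_mul_kD_div_rpow {κ N l L : ℝ} (hN : 1 < N) (hl : 0 < l)
    (hpos : ∀ t ∈ Ioc 0 L, 0 < sK κ t) :
    Tendsto (fun p : ℝ × ℝ => vKND κ N p.2 p.1 * kD κ N p.2 / p.1 ^ N)
      (𝓝[>] 0 ×ˢ 𝓟 (Icc l L)) (𝓝 1) := by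
  have hN' : 1 ≤ N := hN.le
  set F := 𝓝[>] (0:ℝ) ×ˢ 𝓟 (Icc l L)
  have hR := tendsto_meanSKPow_div_sK_rpow (κ := κ) (S := Icc l L) (c := l / 2) hN'
    isCompact_Icc (half_pos hl)
    fun D hD a ha => hpos (D - a) ⟨by linarith [hD.1, ha.2], by linarith [hD.2, ha.1]⟩
  have hG : Tendsto (fun p : ℝ × ℝ => (sK κ p.1 / p.1) ^ (N - 1)) F (𝓝 1) := by
    simpa using ((tendsto_sK_div_self κ).comp tendsto_fst).rpow_const (Or.inl one_ne_zero)
  have ha : Tendsto (fun p : ℝ × ℝ => p.1) F (𝓝 0) :=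
    tendsto_fst.mono_right nhdsWithin_le_nhds
  have hσ : Tendsto (fun p : ℝ × ℝ => sK κ p.1 ^ (N - 1)) F (𝓝 0) := by
    simpa [Function.comp_def, sK_apply_zero, Real.zero_rpow (by linarith : N - 1 ≠ 0)] using
      ((continuous_sK_rpow κ hN').tendsto 0).comp ha
  have hQ : Tendsto (fun p : ℝ × ℝ => kD κ N p.1) F (𝓝 0) := by
    simpa [Function.comp_def] using ((continuous_kD κ hN').tendsto 0).comp ha
  have hkD : ∀ D ∈ Icc l L, 0 < kD κ N D := fun D hD =>
    integral_sK_rpow_pos hN' (hl.trans_le hD.1) fun t ht => hpos t ⟨ht.1, ht.2.le.trans hD.2⟩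
  obtain ⟨C, hC⟩ := isCompact_Icc.exists_bound_of_continuousOn
    ((continuous_kD κ hN').continuousOn.inv₀ fun D hD => (hkD D hD).ne')
  have hE : Tendsto (fun p : ℝ × ℝ => (p.1 * (meanSKPow κ N p.2 p.1 / sK κ (p.2 - p.1) ^ (N - 1)) *
      sK κ p.1 ^ (N - 1) - kD κ N p.1) / kD κ N p.2) F (𝓝 0) := by
    refine squeeze_zero_norm' ?_ (by simpa using ((((ha.mul hR).mul hσ).sub hQ).norm.mul_const C))
    filter_upwards [tendsto_snd (mem_principal_self (Icc l L))] with p hp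
    rw [div_eq_mul_inv, norm_mul]
    exact mul_le_mul_of_nonneg_left (hC _ hp) (norm_nonneg _)
  have hlim := (hR.mul hG).div (tendsto_const_nhds (x := (1:ℝ)).add hE) (by norm_num)
  rw [mul_one, add_zero, div_one] at hlim
  refine hlim.congr' ?_
  filter_upwards [tendsto_fst (Ioo_mem_nhdsGT hl), tendsto_snd (mem_principal_self (Icc l L))]
    with p ha hD
  exact (vKND_mul_kD_div_rpow_eq hN' ha.1 (ha.2.trans_le hD.1)
    fun t ht => hpos t ⟨ht.1, ht.2.trans hD.2⟩).symm

/-- `v_{K,N,D}(a) = (a^N/k_D)(1+o(1))` as `a → 0⁺`, uniformly in `D ∈ [λL, L]`. -/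
theorem stmt1 (N κ lam L : ℝ) (hN : 1 < N) (hκ : κ = -1 ∨ κ = 0 ∨ κ = 1)
    (hlam : lam ∈ Set.Ioc (0:ℝ) 1) (hL : 0 < L) (hLpi : κ = 1 → L < Real.pi) :
    ∀ ε > 0, ∃ δ₀ > 0, ∀ D ∈ Set.Icc (lam * L) L, ∀ a ∈ Set.Ioo (0:ℝ) δ₀,
      |vKND κ N D a * kD κ N D / a ^ N - 1| ≤ ε := by
  intro ε hε
  have hpos : ∀ t ∈ Ioc 0 L, 0 < sK κ t := fun t ht => sK_pos ht.1 fun hκ0 => by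
    obtain rfl : κ = 1 := by rcases hκ with h | h | h <;> first | exact h | linarith
    simpa using ht.2.trans_lt (hLpi rfl)
  have hlim := tendsto_vKND_mul_kD_div_rpow hN (mul_pos hlam.1 hL) hpos
  obtain ⟨δ₀, hδ₀, hδ⟩ := (nhdsGT_basis 0).eventually_iff.1
    (eventually_prod_principal_iff.1 (Metric.tendsto_nhds.1 hlim ε hε))
  exact ⟨δ₀, hδ₀, fun D hD a ha => (Real.dist_eq _ _ ▸ hδ ha D hD).le⟩
end

section
/- Let N > 1. For every ε > 0 there exists δ̄ > 0, depending only on N and ε, such that for every δ ∈ (0, δ̄), setting c = δ^{−1/2}, one has (∫₀^{(c+1)δ} (sin t)^{N−1} dt) / (∫₀^{cδ} (sin t)^{N−1} dt) ≤ 1 + (2N + ε)·δ^{1/2}; equivalently Vol_{N−1,N}((c+1)δ)/Vol_{N−1,N}(cδ) ≤ ((c+2)/c)^N = 1 + 2N δ^{1/2} + o(δ^{1/2}). -/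
open MeasureTheory Filter Set

/-!
With `s = √δ` the two endpoints are `s` and `s + s²`. On `[s, s + s²]` the integrand is at most
`(s + s²)^(N-1)`, while `sin t ≥ t (1 - s²/6)` on `[0, s]` gives
`∫₀^s sin^(N-1) ≥ (1 - s²/6)^(N-1) s^N / N`. Hence the increment is at most
`N s ((1 + s)/(1 - s²/6))^(N-1)` times `∫₀^s sin^(N-1)`, and the last factor tends to `1 < 2`
as `s → 0`.
-/

open Real

theorem mul_one_sub_sq_div_six_le_sin {t s : ℝ} (ht : 0 ≤ t) (hts : t ≤ s) :
    t * (1 - s ^ 2 / 6) ≤ sin t := by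
  rcases ht.eq_or_lt with rfl | ht
  · simp
  have hcube : t * t ^ 2 ≤ t * s ^ 2 := by gcongr
  nlinarith [sin_gt_sub_cube ht]

theorem continuous_sin_rpow {p : ℝ} (hp : 0 ≤ p) : Continuous fun t => sin t ^ p :=
  continuous_sin.rpow_const fun _ => Or.inr hp

theorem integral_sin_rpow_le {p a b : ℝ} (hp : 0 ≤ p) (ha : 0 ≤ a) (hab : a ≤ b)
    (hb : b ≤ π) :
    ∫ t in a..b, sin t ^ p ≤ (b - a) * b ^ p := by
  have hmono := intervalIntegral.integral_mono_on (μ := volume) hab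
    ((continuous_sin_rpow hp).intervalIntegrable a b) intervalIntegrable_const
    fun t ht => rpow_le_rpow (sin_nonneg_of_nonneg_of_le_pi (ha.trans ht.1) (ht.2.trans hb))
      ((sin_le (ha.trans ht.1)).trans ht.2) hp
  simpa only [intervalIntegral.integral_const, smul_eq_mul] using hmono

theorem one_sub_sq_div_six_rpow_mul_le_integral_sin_rpow {N s : ℝ} (hN : 1 ≤ N) (hs0 : 0 ≤ s)
    (hs : s ^ 2 ≤ 6) :
    (1 - s ^ 2 / 6) ^ (N - 1) * (s ^ N / N) ≤ ∫ t in (0:ℝ)..s, sin t ^ (N - 1) := by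
  have hp : 0 ≤ N - 1 := by linarith
  have hc : 0 ≤ 1 - s ^ 2 / 6 := by linarith
  have hmono := intervalIntegral.integral_mono_on (μ := volume)
    (f := fun t => (1 - s ^ 2 / 6) ^ (N - 1) * t ^ (N - 1)) hs0
    (((continuous_id.rpow_const fun _ => Or.inr hp).const_mul _).intervalIntegrable 0 s)
    ((continuous_sin_rpow hp).intervalIntegrable 0 s) fun t ht => by
      rw [← mul_rpow hc ht.1, mul_comm]
      exact rpow_le_rpow (mul_nonneg ht.1 hc) (mul_one_sub_sq_div_six_le_sin ht.1 ht.2) hp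
  rw [intervalIntegral.integral_const_mul, integral_rpow (Or.inl (by linarith)),
    zero_rpow (by linarith), sub_zero, sub_add_cancel] at hmono
  exact hmono

theorem eventually_one_add_rpow_lt_two_mul (p : ℝ) :
    ∀ᶠ s in nhds (0:ℝ), (1 + s) ^ p < 2 * (1 - s ^ 2 / 6) ^ p := by
  refine ContinuousAt.eventually_lt ?_ ?_ (by norm_num)
  · exact (continuousAt_const.add continuousAt_id).rpow_const (Or.inl (by norm_num))
  · exact continuousAt_const.mul
      ((continuousAt_const.sub ((continuousAt_id.pow 2).div_const 6)).rpow_const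
        (Or.inl (by norm_num)))

theorem integral_sin_rpow_add_sq_le {N s : ℝ} (hN : 1 ≤ N) (hs0 : 0 < s) (hs1 : s ≤ 1)
    (hgrowth : (1 + s) ^ (N - 1) ≤ 2 * (1 - s ^ 2 / 6) ^ (N - 1)) :
    ∫ t in (0:ℝ)..s + s ^ 2, sin t ^ (N - 1) ≤
      (1 + 2 * N * s) * ∫ t in (0:ℝ)..s, sin t ^ (N - 1) := by
  have hp : 0 ≤ N - 1 := by linarith
  have hint := fun a b => (continuous_sin_rpow hp).intervalIntegrable (μ := volume) a b
  rw [← intervalIntegral.integral_add_adjacent_intervals (hint 0 s) (hint s (s + s ^ 2)),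
    add_mul, one_mul]
  gcongr
  calc ∫ t in s..s + s ^ 2, sin t ^ (N - 1)
      ≤ (s + s ^ 2 - s) * (s + s ^ 2) ^ (N - 1) :=
        integral_sin_rpow_le hp hs0.le (by nlinarith) (by nlinarith [pi_gt_three])
    _ = s ^ 2 * s ^ (N - 1) * (1 + s) ^ (N - 1) := by
        rw [show s + s ^ 2 = s * (1 + s) by ring, mul_rpow hs0.le (by linarith)]; ring
    _ ≤ s ^ 2 * s ^ (N - 1) * (2 * (1 - s ^ 2 / 6) ^ (N - 1)) := by gcongr
    _ = 2 * N * s * ((1 - s ^ 2 / 6) ^ (N - 1) * (s ^ (N - 1) * s / N)) := by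
        field_simp
    _ = 2 * N * s * ((1 - s ^ 2 / 6) ^ (N - 1) * (s ^ N / N)) := by
        rw [← rpow_add_one hs0.ne', sub_add_cancel]
    _ ≤ 2 * N * s * ∫ t in (0:ℝ)..s, sin t ^ (N - 1) := by
        gcongr
        exact one_sub_sq_div_six_rpow_mul_le_integral_sin_rpow hN hs0.le (by nlinarith)

theorem rpow_neg_half_mul_self {δ : ℝ} (hδ : 0 < δ) : δ ^ (-(1 / 2) : ℝ) * δ = √δ := by
  rw [sqrt_eq_rpow]
  nth_rewrite 2 [← rpow_one δ]
  rw [← rpow_add hδ]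
  norm_num

/-- with `c = δ^(-1/2)`,
`(∫₀^((c+1)δ) sin^(N-1))/(∫₀^(cδ) sin^(N-1)) ≤ 1 + (2N+ε)δ^(1/2)` for small `δ`. -/
theorem stmt14 (N : ℝ) (hN : 1 < N) :
    ∀ ε > 0, ∃ δbar > 0, ∀ δ ∈ Set.Ioo (0:ℝ) δbar,
      (∫ t in (0:ℝ)..((δ ^ (-(1 / 2) : ℝ) + 1) * δ), Real.sin t ^ (N - 1)) /
        (∫ t in (0:ℝ)..(δ ^ (-(1 / 2) : ℝ) * δ), Real.sin t ^ (N - 1)) ≤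
        1 + (2 * N + ε) * δ ^ ((1 : ℝ) / 2) := by
  intro ε hε
  obtain ⟨η, hη, hgrowth⟩ :=
    Metric.eventually_nhds_iff.1 (eventually_one_add_rpow_lt_two_mul (N - 1))
  refine ⟨min (η ^ 2) 1, by positivity, fun δ ⟨hδ0, hδ⟩ => ?_⟩
  have hsη : √δ < η := (sqrt_lt' hη).2 (hδ.trans_le (min_le_left _ _))
  have hs1 : √δ < 1 := (sqrt_lt' one_pos).2 (by nlinarith [min_le_right (η ^ 2) 1])
  have hs0 : 0 < √δ := sqrt_pos.2 hδ0
  rw [add_mul, one_mul, rpow_neg_half_mul_self hδ0, ← sqrt_eq_rpow,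
    show √δ + δ = √δ + √δ ^ 2 by rw [sq_sqrt hδ0.le]]
  have hbound := integral_sin_rpow_add_sq_le hN.le hs0 hs1.le
    (hgrowth (by rwa [dist_zero_right, norm_eq_abs, abs_of_pos hs0])).le
  have hA := one_sub_sq_div_six_rpow_mul_le_integral_sin_rpow hN.le hs0.le (by nlinarith)
  have hA0 := (mul_nonneg (rpow_nonneg (by nlinarith) _) (by positivity)).trans hA
  refine div_le_of_le_mul₀ hA0 (by positivity) (hbound.trans ?_)
  exact mul_le_mul_of_nonneg_right (by nlinarith) hA0
end
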